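/- arXiv:1607.03606 — 4 statements merged into one kernel-verified Lean document; each statement's English description precedes it below -/
import Mathlib

section
/- If a permutation w of {1,…,n} is indecomposable and contains the pattern 132, then w contains at least one of the patterns 2413, 2431, 3142, 4132. Equivalently, an indecomposable permutation that avoids 2413, 2431, 3142 and 4132 is 132-avoiding. -/
/-- The Rothe diagram of a permutation of `{0, …, n-1}` (0-based indexing):
cell `(i,j)` belongs to the diagram iff `j < w i` and `i < w⁻¹ j`. -/
def rothe {n : ℕ} (w : Equiv.Perm (Fin n)) : Finset (Fin n × Fin n) :=
  Finset.univ.filter fun c => c.2 < w c.1 ∧ c.1 < w⁻¹ c.2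

/-- `ℓ(w)`: the number of inversions of `w`. -/
def plen {n : ℕ} (w : Equiv.Perm (Fin n)) : ℕ :=
  (Finset.univ.filter fun p : Fin n × Fin n => p.1 < p.2 ∧ w p.2 < w p.1).card

/-- A standard Rothe tableau of `w`: a labelling of the cells of the Rothe diagram by
`1, …, ℓ(w)` (bijectively), strictly increasing along rows and columns; the labelling
is recorded as a function on all of `Fin n × Fin n` that vanishes off the diagram. -/
def IsSRT {n : ℕ} (w : Equiv.Perm (Fin n)) (T : Fin n × Fin n → ℕ) : Prop :=
  Set.BijOn T ↑(rothe w) (Set.Icc 1 (plen w)) ∧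
  (∀ c, c ∉ rothe w → T c = 0) ∧
  (∀ c ∈ rothe w, ∀ c' ∈ rothe w, c.1 = c'.1 → c.2 < c'.2 → T c < T c') ∧
  (∀ c ∈ rothe w, ∀ c' ∈ rothe w, c.2 = c'.2 → c.1 < c'.1 → T c < T c')

noncomputable def srtCard {n : ℕ} (w : Equiv.Perm (Fin n)) : ℕ :=
  Nat.card {T : Fin n × Fin n → ℕ // IsSRT w T}

/-- The hook of a cell of the Rothe diagram. -/
def hook {n : ℕ} (w : Equiv.Perm (Fin n)) (c : Fin n × Fin n) : Finset (Fin n × Fin n) :=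
  (rothe w).filter fun d => (d.1 = c.1 ∧ c.2 ≤ d.2) ∨ (d.2 = c.2 ∧ c.1 ≤ d.1)

/-- A balanced Rothe tableau of `w`. -/
def IsBRT {n : ℕ} (w : Equiv.Perm (Fin n)) (T : Fin n × Fin n → ℕ) : Prop :=
  Set.BijOn T ↑(rothe w) (Set.Icc 1 (plen w)) ∧
  (∀ c, c ∉ rothe w → T c = 0) ∧
  ∀ c ∈ rothe w,
    ((hook w c).filter fun d => T d < T c).card
      = ((rothe w).filter fun d => d.1 = c.1 ∧ c.2 < d.2).card

noncomputable def brtCard {n : ℕ} (w : Equiv.Perm (Fin n)) : ℕ :=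
  Nat.card {T : Fin n × Fin n → ℕ // IsBRT w T}

/-- `w` contains the pattern `p`. -/
def ContainsPattern {n k : ℕ} (w : Equiv.Perm (Fin n)) (p : Equiv.Perm (Fin k)) : Prop :=
  ∃ f : Fin k → Fin n, StrictMono f ∧ ∀ s t : Fin k, w (f s) < w (f t) ↔ p s < p t

/-- The pattern 2413 (0-based one-line notation `1 3 0 2`). -/
def p2413 : Equiv.Perm (Fin 4) :=
  ⟨![1,3,0,2], ![2,0,3,1], by intro x; fin_cases x <;> rfl, by intro x; fin_cases x <;> rfl⟩

def p2431 : Equiv.Perm (Fin 4) :=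
  ⟨![1,3,2,0], ![3,0,2,1], by intro x; fin_cases x <;> rfl, by intro x; fin_cases x <;> rfl⟩

def p3142 : Equiv.Perm (Fin 4) :=
  ⟨![2,0,3,1], ![1,3,0,2], by intro x; fin_cases x <;> rfl, by intro x; fin_cases x <;> rfl⟩

def p4132 : Equiv.Perm (Fin 4) :=
  ⟨![3,0,2,1], ![1,3,2,0], by intro x; fin_cases x <;> rfl, by intro x; fin_cases x <;> rfl⟩

def p4213 : Equiv.Perm (Fin 4) :=
  ⟨![3,1,0,2], ![2,1,3,0], by intro x; fin_cases x <;> rfl, by intro x; fin_cases x <;> rfl⟩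

def p3241 : Equiv.Perm (Fin 4) :=
  ⟨![2,1,3,0], ![3,1,0,2], by intro x; fin_cases x <;> rfl, by intro x; fin_cases x <;> rfl⟩

def p132 : Equiv.Perm (Fin 3) :=
  ⟨![0,2,1], ![0,2,1], by intro x; fin_cases x <;> rfl, by intro x; fin_cases x <;> rfl⟩

/-- The adjacent transposition `s_a` (0-based: swaps `a` and `a+1`), as a permutation
of `Fin n`; it is the identity when `a+1 ≥ n`. -/
def adjT (n a : ℕ) : Equiv.Perm (Fin n) :=
  if h : a + 1 < n then Equiv.swap ⟨a, Nat.lt_of_succ_lt h⟩ ⟨a + 1, h⟩ else 1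

/-- Reduced words of `w`, written with 0-based letters `a` (`0 ≤ a ≤ n-2`). -/
def IsReducedWord {n : ℕ} (w : Equiv.Perm (Fin n)) (L : List ℕ) : Prop :=
  (∀ a ∈ L, a + 1 < n) ∧ (L.map (adjT n)).prod = w ∧ L.length = plen w

noncomputable def rwCard {n : ℕ} (w : Equiv.Perm (Fin n)) : ℕ :=
  Nat.card {L : List ℕ // IsReducedWord w L}

/-- Direct sum of two permutations. -/
def dsum {k m : ℕ} (u : Equiv.Perm (Fin k)) (v : Equiv.Perm (Fin m)) :
    Equiv.Perm (Fin (k + m)) :=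
  finSumFinEquiv.permCongr (Equiv.sumCongr u v)

def dsumSig (p q : Σ m : ℕ, Equiv.Perm (Fin m)) : Σ m : ℕ, Equiv.Perm (Fin m) :=
  ⟨p.1 + q.1, dsum p.2 q.2⟩

/-- The direct sum `w¹ ⊕ w² ⊕ ⋯ ⊕ wᵏ` of a list of permutations. -/
def dsumList (l : List (Σ m : ℕ, Equiv.Perm (Fin m))) : Σ m : ℕ, Equiv.Perm (Fin m) :=
  l.foldr dsumSig ⟨0, 1⟩

/-- `w` is decomposable if it maps `{0,…,k-1}` onto itself for some `0 < k < n`. -/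
def Decomposable {n : ℕ} (w : Equiv.Perm (Fin n)) : Prop :=
  ∃ k : ℕ, 0 < k ∧ k < n ∧ ∀ i : Fin n, (i : ℕ) < k → ((w i : ℕ)) < k

/-- The Lehmer code of `w`. -/
def lehmer {n : ℕ} (w : Equiv.Perm (Fin n)) (i : Fin n) : ℕ :=
  (Finset.univ.filter fun j : Fin n => i < j ∧ w j < w i).card

/-- The cells of the Young diagram of `lam`. -/
def yCells {m : ℕ} (lam : Fin m → ℕ) : Set (Fin m × ℕ) :=
  {c | c.2 < lam c.1}

/-- A standard Young tableau of shape `lam`. -/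
def IsSYT {m : ℕ} (lam : Fin m → ℕ) (T : Fin m × ℕ → ℕ) : Prop :=
  Set.BijOn T (yCells lam) (Set.Icc 1 (∑ i, lam i)) ∧
  (∀ c, c ∉ yCells lam → T c = 0) ∧
  (∀ c ∈ yCells lam, ∀ c' ∈ yCells lam, c.1 = c'.1 → c.2 < c'.2 → T c < T c') ∧
  (∀ c ∈ yCells lam, ∀ c' ∈ yCells lam, c.2 = c'.2 → c.1 < c'.1 → T c < T c')

/-- `f^λ`: the number of standard Young tableaux of shape `lam`. -/
noncomputable def sytCard {m : ℕ} (lam : Fin m → ℕ) : ℕ :=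
  Nat.card {T : Fin m × ℕ → ℕ // IsSYT lam T}

section AuxIndec132

variable {n : ℕ}

private lemma aux2413' (w : Equiv.Perm (Fin n)) {a b c d : Fin n}
    (hab : a < b) (hbc : b < c) (hcd : c < d)
    (h1 : w c < w a) (h2 : w a < w d) (h3 : w d < w b) :
    ContainsPattern w p2413 := by
  have h4 : w c < w d := lt_trans h1 h2
  have h5 : w c < w b := lt_trans h4 h3
  have h6 : w a < w b := lt_trans h2 h3
  have h1' := asymm h1; have h2' := asymm h2; have h3' := asymm h3
  have h4' := asymm h4; have h5' := asymm h5; have h6' := asymm h6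
  refine ⟨![a,b,c,d], ?_, ?_⟩
  · rw [Fin.strictMono_iff_lt_succ]
    intro i; fin_cases i <;> simpa
  · intro s t
    fin_cases s <;> fin_cases t <;>
      first
        | exact iff_of_true (by assumption) (by decide)
        | exact iff_of_false (by assumption) (by decide)
        | exact iff_of_false (lt_irrefl _) (by decide)

private lemma aux2431' (w : Equiv.Perm (Fin n)) {a b c d : Fin n}
    (hab : a < b) (hbc : b < c) (hcd : c < d)
    (h1 : w d < w a) (h2 : w a < w c) (h3 : w c < w b) :
    ContainsPattern w p2431 := by
  have h4 : w d < w c := lt_trans h1 h2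
  have h5 : w d < w b := lt_trans h4 h3
  have h6 : w a < w b := lt_trans h2 h3
  have h1' := asymm h1; have h2' := asymm h2; have h3' := asymm h3
  have h4' := asymm h4; have h5' := asymm h5; have h6' := asymm h6
  refine ⟨![a,b,c,d], ?_, ?_⟩
  · rw [Fin.strictMono_iff_lt_succ]
    intro i; fin_cases i <;> simpa
  · intro s t
    fin_cases s <;> fin_cases t <;>
      first
        | exact iff_of_true (by assumption) (by decide)
        | exact iff_of_false (by assumption) (by decide)
        | exact iff_of_false (lt_irrefl _) (by decide)

private lemma aux3142' (w : Equiv.Perm (Fin n)) {a b c d : Fin n}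
    (hab : a < b) (hbc : b < c) (hcd : c < d)
    (h1 : w b < w d) (h2 : w d < w a) (h3 : w a < w c) :
    ContainsPattern w p3142 := by
  have h4 : w b < w a := lt_trans h1 h2
  have h5 : w b < w c := lt_trans h4 h3
  have h6 : w d < w c := lt_trans h2 h3
  have h1' := asymm h1; have h2' := asymm h2; have h3' := asymm h3
  have h4' := asymm h4; have h5' := asymm h5; have h6' := asymm h6
  refine ⟨![a,b,c,d], ?_, ?_⟩
  · rw [Fin.strictMono_iff_lt_succ]
    intro i; fin_cases i <;> simpa
  · intro s t
    fin_cases s <;> fin_cases t <;>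
      first
        | exact iff_of_true (by assumption) (by decide)
        | exact iff_of_false (by assumption) (by decide)
        | exact iff_of_false (lt_irrefl _) (by decide)

private lemma aux4132' (w : Equiv.Perm (Fin n)) {a b c d : Fin n}
    (hab : a < b) (hbc : b < c) (hcd : c < d)
    (h1 : w b < w d) (h2 : w d < w c) (h3 : w c < w a) :
    ContainsPattern w p4132 := by
  have h4 : w b < w c := lt_trans h1 h2
  have h5 : w b < w a := lt_trans h4 h3
  have h6 : w d < w a := lt_trans h2 h3
  have h1' := asymm h1; have h2' := asymm h2; have h3' := asymm h3
  have h4' := asymm h4; have h5' := asymm h5; have h6' := asymm h6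
  refine ⟨![a,b,c,d], ?_, ?_⟩
  · rw [Fin.strictMono_iff_lt_succ]
    intro i; fin_cases i <;> simpa
  · intro s t
    fin_cases s <;> fin_cases t <;>
      first
        | exact iff_of_true (by assumption) (by decide)
        | exact iff_of_false (by assumption) (by decide)
        | exact iff_of_false (lt_irrefl _) (by decide)

end AuxIndec132

/-- an indecomposable permutation containing the pattern 132
contains one of 2413, 2431, 3142, 4132. -/
theorem indecomposable_contains132 {n : ℕ} (w : Equiv.Perm (Fin n))
    (hind : ¬ Decomposable w) (h : ContainsPattern w p132) :
    ContainsPattern w p2413 ∨ ContainsPattern w p2431 ∨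
    ContainsPattern w p3142 ∨ ContainsPattern w p4132 := by
  by_contra hcon
  push_neg at hcon
  obtain ⟨h2413, h2431, h3142, h4132⟩ := hcon
  apply hind
  -- rule A: no small element after the middle of a 132-occurrence
  have hA : ∀ i j k r : Fin n, i < j → j < k → w i < w k → w k < w j → j < r →
      ¬ w r < w i := by
    intro i j k r hij hjk hik hkj hjr hri
    rcases lt_trichotomy r k with hrk | hrk | hrk
    · exact h2413 (aux2413' w hij hjr hrk hri hik hkj)
    · subst hrk; exact absurd hik (asymm hri)
    · exact h2431 (aux2431' w hij hjk hrk hri hik hkj)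
  -- rule B: every element before the start of a 132-occurrence is small
  have hB : ∀ i j k r : Fin n, i < j → j < k → w i < w k → w k < w j → r < i →
      w r < w k := by
    intro i j k r hij hjk hik hkj hri
    by_contra hnk
    push_neg at hnk
    have hrk : r ≠ k := ne_of_lt (lt_trans (lt_trans hri hij) hjk)
    have hkr : w k < w r :=
      lt_of_le_of_ne hnk (fun e => hrk ((w.injective e).symm))
    rcases lt_trichotomy (w r) (w j) with hrj | hrj | hrj
    · exact h3142 (aux3142' w hri hij hjk hik hkr hrj)
    · exact absurd (w.injective hrj) (ne_of_lt (lt_trans hri hij))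
    · exact h4132 (aux4132' w hri hij hjk hik hkj hrj)
  classical
  -- a 132-occurrence exists
  obtain ⟨f, hfm, hfp⟩ := h
  have hocc0 : ∃ m : ℕ, ∃ i j k : Fin n,
      i < j ∧ j < k ∧ w i < w k ∧ w k < w j ∧ (w k : ℕ) = m := by
    refine ⟨(w (f 2) : ℕ), f 0, f 1, f 2, hfm (by decide), hfm (by decide),
      ?_, ?_, rfl⟩
    · exact (hfp 0 2).mpr (by decide)
    · exact (hfp 2 1).mpr (by decide)
  set z := Nat.find hocc0 with hzdef
  obtain ⟨i, j, k, hij, hjk, hik, hkj, hzk⟩ := Nat.find_spec hocc0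
  -- down-closedness of { p | (w p) < z }
  have hdc : ∀ p q : Fin n, (w p : ℕ) < z → q < p → (w q : ℕ) < z := by
    intro p q hp hqp
    by_contra hq
    push_neg at hq
    rcases lt_trichotomy q i with hqi | hqi | hqi
    · have hlt := hB i j k q hij hjk hik hkj hqi
      rw [Fin.lt_def] at hlt
      omega
    · subst hqi
      rw [Fin.lt_def] at hik
      omega
    · rcases lt_trichotomy (w i) (w p) with hip | hip | hip
      · have hPp : ∃ i' j' k' : Fin n, i' < j' ∧ j' < k' ∧ w i' < w k' ∧
            w k' < w j' ∧ (w k' : ℕ) = (w p : ℕ) :=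
          ⟨i, q, p, hqi, hqp, hip, Fin.lt_def.mpr (by omega), rfl⟩
        exact Nat.find_min hocc0 (by omega : (w p : ℕ) < z) hPp
      · have : i = p := w.injective hip
        subst this
        exact absurd hqp (asymm hqi)
      · rcases lt_trichotomy p j with hpj | hpj | hpj
        · have hlt := hB p j k q hpj hjk (Fin.lt_def.mpr (by omega)) hkj hqp
          rw [Fin.lt_def] at hlt
          omega
        · subst hpj
          rw [Fin.lt_def] at hkj
          omega
        · exact hA i j k p hij hjk hik hkj hpj hip
  -- counting: the set of positions with small values is exactly [0, z)
  have hzn : z < n := by rw [hzdef, ← hzk]; exact (w k).isLt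
  set S : Finset (Fin n) := Finset.univ.filter fun p => ((w p : Fin n) : ℕ) < z
    with hSdef
  set T : Finset (Fin n) := Finset.univ.filter fun v => (v : ℕ) < z with hTdef
  have hmemS : ∀ p : Fin n, p ∈ S ↔ (w p : ℕ) < z := by
    intro p; simp [hSdef]
  have hmemT : ∀ v : Fin n, v ∈ T ↔ (v : ℕ) < z := by
    intro v; simp [hTdef]
  have hTcard : T.card = z := by
    have hTIio : T = Finset.Iio (⟨z, hzn⟩ : Fin n) := by
      ext v
      rw [hmemT, Finset.mem_Iio, Fin.lt_def]
    rw [hTIio, Fin.card_Iio]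
  have hScard : S.card = z := by
    have himg : S = T.image ⇑w.symm := by
      ext p
      rw [hmemS, Finset.mem_image]
      constructor
      · intro hp
        exact ⟨w p, (hmemT _).mpr hp, w.symm_apply_apply p⟩
      · rintro ⟨v, hv, rfl⟩
        rw [w.apply_symm_apply]
        exact (hmemT _).mp hv
    rw [himg, Finset.card_image_of_injective _ w.symm.injective, hTcard]
  have hSsubT : S ⊆ T := by
    intro p hp
    rw [hmemT]
    by_contra hpz
    push_neg at hpz
    have hsub : Finset.Iic p ⊆ S := by
      intro q hq
      rw [Finset.mem_Iic] at hq
      rcases eq_or_lt_of_le hq with rfl | hq'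
      · exact hp
      · exact (hmemS _).mpr (hdc p q ((hmemS _).mp hp) hq')
    have := Finset.card_le_card hsub
    rw [Fin.card_Iic, hScard] at this
    omega
  have hTS : T = S :=
    (Finset.eq_of_subset_of_card_le hSsubT (by rw [hScard, hTcard])).symm
  -- conclude decomposability with cut z
  refine ⟨z, ?_, hzn, ?_⟩
  · rw [Fin.lt_def] at hik
    omega
  · intro v hv
    have : v ∈ S := hTS ▸ (hmemT v).mpr hv
    exact (hmemS v).mp this
end

section
/- If a permutation w of {1,…,n} avoids the patterns 2413, 2431, 3142 and 4132, then w is a direct sum of 132-avoiding permutations: there exist k ≥ 1 and permutations w^1,…,w^k, each avoiding the pattern 132, with w = w^1 ⊕ ⋯ ⊕ w^k. -/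
/-! Every permutation is the direct sum of indecomposable permutations, each of them a pattern of
it: split off the shortest initial segment that `w` maps onto itself and recurse on the rest. So it
suffices to show that an indecomposable `w` avoiding 2413, 2431, 3142 and 4132 avoids 132.
Take an occurrence `i < j < l`, `w i < w l < w j`, of 132 with `i` as large as possible, and let
`m ≤ i` maximise `w` on `[0, i]`. Avoiding 3142 and 4132 forces `w m < w l`. Then `w y > w m` for
every `y > i`: otherwise `y` starts a later occurrence of 132 (if `y < j`), or `m, j, y, l` is a
2413, or `m, j, l, y` is a 2431. Hence `w` maps `[0, i]` onto itself although `i < j`, so `w` is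
decomposable. -/

open Equiv Function

theorem ContainsPattern.refl {n : ℕ} (w : Perm (Fin n)) : ContainsPattern w w :=
  ⟨id, strictMono_id, fun _ _ => Iff.rfl⟩

theorem ContainsPattern.trans {n k j : ℕ} {w : Perm (Fin n)} {u : Perm (Fin k)}
    {p : Perm (Fin j)} (hwu : ContainsPattern w u) (hup : ContainsPattern u p) :
    ContainsPattern w p := by
  obtain ⟨f, hf, hfw⟩ := hwu
  obtain ⟨g, hg, hgu⟩ := hup
  exact ⟨f ∘ g, hf.comp hg, fun s t => (hfw _ _).trans (hgu s t)⟩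

theorem containsPattern_of_apply_eq {n k : ℕ} {w : Perm (Fin n)} {p : Perm (Fin k)}
    {f g : Fin k → Fin n} (hf : StrictMono f) (hg : StrictMono g)
    (hfg : ∀ i, w (f i) = g (p i)) : ContainsPattern w p :=
  ⟨f, hf, fun s t => by rw [hfg, hfg, hg.lt_iff_lt]⟩

theorem strictMono_vecFour {α : Type*} [Preorder α] {a b c d : α}
    (hab : a < b) (hbc : b < c) (hcd : c < d) : StrictMono ![a, b, c, d] :=
  ((strictMono_vecEmpty.vecCons hcd).vecCons hbc).vecCons hab

theorem Equiv.Perm.exists_sumCongr_eq {α β : Type*} [Finite α] [Finite β] (σ : Perm (α ⊕ β))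
    (h : ∀ a, ∃ a', σ (.inl a) = .inl a') : ∃ u v, Equiv.sumCongr u v = σ := by
  choose f hf using h
  have hfbij : Bijective f := Finite.injective_iff_bijective.1 fun a b hab =>
    Sum.inl_injective (σ.injective (by rw [hf, hf, hab]))
  have hr : ∀ b, ∃ b', σ (.inr b) = .inr b' := by
    intro b
    rcases hσ : σ (.inr b) with a' | b'
    · obtain ⟨a, rfl⟩ := hfbij.2 a'
      exact absurd (σ.injective (hσ.trans (hf a).symm)) Sum.inr_ne_inl
    · exact ⟨b', rfl⟩
  choose g hg using hr
  have hgbij : Bijective g := Finite.injective_iff_bijective.1 fun a b hab =>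
    Sum.inr_injective (σ.injective (by rw [hg, hg, hab]))
  refine ⟨Equiv.ofBijective f hfbij, Equiv.ofBijective g hgbij, Equiv.ext ?_⟩
  rintro (a | b) <;> simp [hf, hg]

section DirectSum

variable {k m : ℕ} (u : Perm (Fin k)) (v : Perm (Fin m))

@[simp]
theorem dsum_apply_castAdd (i : Fin k) : dsum u v (Fin.castAdd m i) = Fin.castAdd m (u i) := by
  simp [dsum]

@[simp]
theorem dsum_apply_natAdd (j : Fin m) : dsum u v (Fin.natAdd k j) = Fin.natAdd k (v j) := by
  simp [dsum]

theorem containsPattern_dsum_left : ContainsPattern (dsum u v) u :=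
  ⟨Fin.castAdd m, Fin.strictMono_castAdd m, fun s t => by
    simp [(Fin.strictMono_castAdd m).lt_iff_lt]⟩

theorem containsPattern_dsum_right : ContainsPattern (dsum u v) v :=
  ⟨Fin.natAdd k, Fin.strictMono_natAdd k, fun s t => by simp⟩

end DirectSum

theorem dsumList_singleton {n : ℕ} (w : Perm (Fin n)) : dsumList [⟨n, w⟩] = ⟨n, w⟩ :=
  show (⟨n + 0, dsum w 1⟩ : Σ m, Perm (Fin m)) = ⟨n, w⟩ from
    Sigma.ext rfl <| heq_of_eq <| Equiv.ext fun i => dsum_apply_castAdd w 1 i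

theorem exists_dsum_eq_of_lt {k m : ℕ} (w : Perm (Fin (k + m)))
    (h : ∀ i : Fin k, (w (Fin.castAdd m i) : ℕ) < k) : ∃ u v, dsum u v = w := by
  obtain ⟨u, v, huv⟩ := (finSumFinEquiv.symm.permCongr w).exists_sumCongr_eq fun i =>
    ⟨⟨_, h i⟩, by simp [← finSumFinEquiv_symm_apply_castAdd]⟩
  exact ⟨u, v, by rw [dsum, huv]; ext; simp⟩

theorem Decomposable.exists_indecomposable_dsum_eq {n : ℕ} {w : Perm (Fin n)}
    (hw : Decomposable w) :
    ∃ k m, ∃ (u : Perm (Fin k)) (v : Perm (Fin m)), 0 < k ∧ ¬ Decomposable u ∧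
      (⟨k + m, dsum u v⟩ : Σ n, Perm (Fin n)) = ⟨n, w⟩ := by
  classical
  obtain ⟨k, ⟨hk0, hkn, hk⟩, hmin⟩ :
      ∃ k, (0 < k ∧ k < n ∧ ∀ i : Fin n, (i : ℕ) < k → (w i : ℕ) < k) ∧
        ∀ k' < k, ¬ (0 < k' ∧ k' < n ∧ ∀ i : Fin n, (i : ℕ) < k' → (w i : ℕ) < k') :=
    ⟨Nat.find hw, Nat.find_spec hw, fun _ => Nat.find_min hw⟩
  obtain ⟨m, rfl⟩ := Nat.exists_eq_add_of_le hkn.le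
  obtain ⟨u, v, rfl⟩ := exists_dsum_eq_of_lt w fun i => hk _ i.isLt
  refine ⟨k, m, u, v, hk0, ?_, rfl⟩
  rintro ⟨k', hk'0, hk'k, hk'⟩
  refine hmin k' hk'k ⟨hk'0, by omega, fun i hi => ?_⟩
  rw [show i = Fin.castAdd m ⟨i, by omega⟩ from rfl, dsum_apply_castAdd]
  exact hk' _ hi

theorem exists_indecomposable_dsumList_eq {n : ℕ} (w : Perm (Fin n)) :
    ∃ ws : List (Σ m, Perm (Fin m)), ws ≠ [] ∧
      (∀ p ∈ ws, ContainsPattern w p.2 ∧ ¬ Decomposable p.2) ∧ dsumList ws = ⟨n, w⟩ := by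
  induction n using Nat.strong_induction_on with
  | _ n ih =>
  by_cases hw : Decomposable w
  · obtain ⟨k, m, u, v, hk, hu, he⟩ := hw.exists_indecomposable_dsum_eq
    obtain ⟨rfl, he⟩ := Sigma.mk.inj_iff.1 he
    obtain rfl := eq_of_heq he
    obtain ⟨ws, -, hws, hv⟩ := ih m (by omega) v
    refine ⟨⟨k, u⟩ :: ws, List.cons_ne_nil _ _, ?_, ?_⟩
    · simp only [List.mem_cons, forall_eq_or_imp]
      exact ⟨⟨containsPattern_dsum_left u v, hu⟩,
        fun p hp => ⟨(containsPattern_dsum_right u v).trans (hws p hp).1, (hws p hp).2⟩⟩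
    · change dsumSig ⟨k, u⟩ (dsumList ws) = _
      rw [hv]
      rfl
  · exact ⟨[⟨n, w⟩], List.cons_ne_nil _ _, by simpa using ⟨.refl w, hw⟩, dsumList_singleton w⟩

theorem decomposable_of_forall_lt {n : ℕ} {w : Perm (Fin n)} {q : Fin n} (hq : (q : ℕ) + 1 < n)
    (h : ∀ x y, x ≤ q → q < y → w x < w y) : Decomposable w := by
  refine ⟨q + 1, q.val.succ_pos, hq, fun x hx => ?_⟩
  have hcard : (Finset.Iic (w x)).card ≤ (Finset.Iic q).card := by
    refine Finset.card_le_card_of_injOn w.symm (fun v hv => ?_) w.symm.injective.injOn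
    simp only [Finset.coe_Iic, Set.mem_Iic] at hv ⊢
    by_contra! hqv
    exact (h x _ (Fin.le_def.2 (by omega)) hqv).not_ge (by simpa using hv)
  simp only [Fin.card_Iic] at hcard
  omega

def IsOccurrence132 {n : ℕ} (w : Perm (Fin n)) (i j l : Fin n) : Prop :=
  i < j ∧ j < l ∧ w i < w l ∧ w l < w j

theorem ContainsPattern.exists_isOccurrence132 {n : ℕ} {w : Perm (Fin n)}
    (h : ContainsPattern w p132) : ∃ i j l, IsOccurrence132 w i j l := by
  obtain ⟨f, hf, hfw⟩ := h
  exact ⟨f 0, f 1, f 2, hf (by decide), hf (by decide), (hfw 0 2).2 (by decide),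
    (hfw 2 1).2 (by decide)⟩

theorem IsOccurrence132.apply_lt_apply {n : ℕ} {w : Perm (Fin n)}
    (h2413 : ¬ ContainsPattern w p2413) (h2431 : ¬ ContainsPattern w p2431)
    (h3142 : ¬ ContainsPattern w p3142) (h4132 : ¬ ContainsPattern w p4132)
    {i j l : Fin n} (hocc : IsOccurrence132 w i j l)
    (hmax : ∀ i' j' l', IsOccurrence132 w i' j' l' → i' ≤ i)
    {x y : Fin n} (hxi : x ≤ i) (hiy : i < y) : w x < w y := by
  obtain ⟨hij, hjl, hil, hlj⟩ := hocc
  obtain ⟨m, hmi, hm⟩ : ∃ m ≤ i, ∀ x ≤ i, w x ≤ w m := by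
    simpa using (Finset.Iic i).exists_max_image w ⟨i, Finset.mem_Iic.2 le_rfl⟩
  have hml : w m < w l := by
    rcases hmi.lt_or_eq with hmi' | rfl
    · by_contra! hlm
      replace hlm := hlm.lt_of_ne (w.injective.ne (hmi'.trans (hij.trans hjl)).ne')
      rcases (w.injective.ne (hmi'.trans hij).ne).lt_or_gt with hmj | hjm
      · exact h3142 <| containsPattern_of_apply_eq (strictMono_vecFour hmi' hij hjl)
          (strictMono_vecFour hil hlm hmj) (by intro t; fin_cases t <;> rfl)
      · exact h4132 <| containsPattern_of_apply_eq (strictMono_vecFour hmi' hij hjl)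
          (strictMono_vecFour hil hlj hjm) (by intro t; fin_cases t <;> rfl)
    · exact hil
  refine (hm x hxi).trans_lt ?_
  by_contra! hym
  replace hym := hym.lt_of_ne (w.injective.ne (hmi.trans_lt hiy).ne')
  rcases lt_trichotomy y j with hyj | rfl | hjy
  · exact hiy.not_ge (hmax y j l ⟨hyj, hjl, hym.trans hml, hlj⟩)
  · exact hym.not_gt (hml.trans hlj)
  rcases lt_trichotomy y l with hyl | rfl | hly
  · exact h2413 <| containsPattern_of_apply_eq (strictMono_vecFour (hmi.trans_lt hij) hjy hyl)
      (strictMono_vecFour hym hml hlj) (by intro t; fin_cases t <;> rfl)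
  · exact hym.not_gt hml
  · exact h2431 <| containsPattern_of_apply_eq (strictMono_vecFour (hmi.trans_lt hij) hjl hly)
      (strictMono_vecFour hym hml hlj) (by intro t; fin_cases t <;> rfl)

theorem decomposable_of_containsPattern_p132 {n : ℕ} {w : Perm (Fin n)}
    (h2413 : ¬ ContainsPattern w p2413) (h2431 : ¬ ContainsPattern w p2431)
    (h3142 : ¬ ContainsPattern w p3142) (h4132 : ¬ ContainsPattern w p4132)
    (h132 : ContainsPattern w p132) : Decomposable w := by
  classical
  obtain ⟨i₀, j₀, l₀, h₀⟩ := h132.exists_isOccurrence132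
  set S := Finset.univ.filter fun i => ∃ j l, IsOccurrence132 w i j l with hS
  obtain ⟨i, hiS, hmax⟩ := S.exists_max_image id ⟨i₀, by simpa [hS] using ⟨j₀, l₀, h₀⟩⟩
  obtain ⟨j, l, hocc⟩ : ∃ j l, IsOccurrence132 w i j l := by simpa [hS] using hiS
  refine decomposable_of_forall_lt (q := i) (by have := hocc.1; omega) fun x y hx hy =>
    hocc.apply_lt_apply h2413 h2431 h3142 h4132 (fun i' j' l' h' => ?_) hx hy
  exact hmax i' (by simpa [hS] using ⟨j', l', h'⟩)

/-- a permutation avoiding 2413, 2431, 3142, 4132 is a direct sum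
of 132-avoiding permutations. -/
theorem avoiders_dsum_of_dominant {n : ℕ} (w : Equiv.Perm (Fin n))
    (h1 : ¬ ContainsPattern w p2413) (h2 : ¬ ContainsPattern w p2431)
    (h3 : ¬ ContainsPattern w p3142) (h4 : ¬ ContainsPattern w p4132) :
    ∃ ws : List (Σ m : ℕ, Equiv.Perm (Fin m)), ws ≠ [] ∧
      (∀ p ∈ ws, ¬ ContainsPattern p.2 p132) ∧ dsumList ws = ⟨n, w⟩ := by
  obtain ⟨ws, hne, hws, hsum⟩ := exists_indecomposable_dsumList_eq w
  refine ⟨ws, hne, fun p hp h132 => ?_, hsum⟩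
  obtain ⟨hwp, hindec⟩ := hws p hp
  exact hindec <| decomposable_of_containsPattern_p132 (fun h => h1 (hwp.trans h))
    (fun h => h2 (hwp.trans h)) (fun h => h3 (hwp.trans h)) (fun h => h4 (hwp.trans h)) h132
end

section
/- If a permutation w of {1,…,n} is indecomposable and avoids the patterns 2413, 2431, 3142 and 4132, then its Rothe diagram D(w) is a Young diagram, i.e., whenever (i,j) ∈ D(w) and 1 ≤ i' ≤ i, 1 ≤ j' ≤ j, one also has (i',j') ∈ D(w). -/
/-!
An indecomposable permutation `w` avoiding 2413, 2431, 3142 and 4132 avoids 132. Take an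
occurrence `a < b < c`, `w a < w c < w b`, of 132 with `b` leftmost and then `w c` smallest.
Avoiding 3142 and 4132 forces every position left of `a` to carry a value below `w c`;
minimality of `b` extends this to all positions left of `b`. Avoiding 2413 and 2431 forces every
position right of `b` to carry a value above `w a`, and minimality of `w c` then makes it at
least `w c`. So the values below `w c` all sit before `b`, whence `w c ≤ b`, and `w` maps the
first `b` positions into themselves.

A 132-avoiding permutation has a Young-shaped Rothe diagram: if `(i, j)` is a cell and
`k = w⁻¹ j`, then every `x ≤ i` has `j < w x`, since otherwise `x < i < k` would be a 132.
-/

open Equiv Function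

lemma Fin.val_le_of_injective_of_mapsTo_Iio {m n : ℕ} {f : Fin m → Fin n} (hf : Injective f)
    {a : Fin m} {b : Fin n} (h : Set.MapsTo f (Set.Iio a) (Set.Iio b)) : (a : ℕ) ≤ b := by
  have := Finset.card_le_card_of_injOn f (s := Finset.Iio a) (t := Finset.Iio b)
    (by simpa only [Finset.coe_Iio] using h) hf.injOn
  simpa only [Fin.card_Iio] using this

section Patterns

variable {n k : ℕ} {w : Perm (Fin n)}

lemma containsPattern_of_strictMono {p : Perm (Fin k)} {f g : Fin k → Fin n}
    (hf : StrictMono f) (hg : StrictMono g) (hfg : ∀ i, w (f i) = g (p i)) :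
    ContainsPattern w p :=
  ⟨f, hf, fun s t => by rw [hfg, hfg, hg.lt_iff_lt]⟩

lemma containsPattern_p132_iff :
    ContainsPattern w p132 ↔ ∃ a b c, a < b ∧ b < c ∧ w a < w c ∧ w c < w b := by
  constructor
  · rintro ⟨f, hf, hw⟩
    exact ⟨f 0, f 1, f 2, hf (by decide), hf (by decide), (hw 0 2).2 (by decide),
      (hw 2 1).2 (by decide)⟩
  · rintro ⟨a, b, c, hab, hbc, hac, hcb⟩
    exact containsPattern_of_strictMono (f := ![a, b, c]) (g := ![w a, w c, w b])
      (by simp [hab, hbc]) (by simp [hac, hcb]) (by intro i; fin_cases i <;> rfl)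

end Patterns

section Dominant

variable {n : ℕ} {w : Perm (Fin n)}

lemma lt_apply_of_not_containsPattern_p132 (h : ¬ ContainsPattern w p132) {x i k : Fin n}
    (hxi : x ≤ i) (hik : i < k) (hki : w k < w i) : w k < w x := by
  rcases hxi.lt_or_eq with hxi | rfl
  · by_contra! hxk
    have hne : w x ≠ w k := w.injective.ne (hxi.trans hik).ne
    exact h (containsPattern_p132_iff.2 ⟨x, i, k, hxi, hik, hxk.lt_of_ne hne, hki⟩)
  · exact hki

theorem isLowerSet_rothe_of_not_containsPattern_p132 (h : ¬ ContainsPattern w p132) :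
    IsLowerSet (rothe w : Set (Fin n × Fin n)) := by
  rintro ⟨i, j⟩ ⟨i', j'⟩ ⟨hi, hj⟩ hc
  simp only [rothe, Finset.coe_filter, Finset.mem_univ, true_and, Set.mem_ofPred_eq] at hc ⊢
  obtain ⟨hj_lt, hi_lt⟩ := hc
  have hw : ∀ y, w (w⁻¹ y) = y := w.apply_symm_apply
  have left_of_i : ∀ x ≤ i, j < w x := fun x hx => by
    simpa only [hw] using lt_apply_of_not_containsPattern_p132 h hx hi_lt (by rwa [hw])
  refine ⟨hj.trans_lt (left_of_i i' hi), ?_⟩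
  by_contra! hle
  have := left_of_i (w⁻¹ j') (hle.trans hi)
  rw [hw] at this
  exact (this.trans_le hj).false

end Dominant

section Indecomposable

variable {n : ℕ} {w : Perm (Fin n)} {a b c d : Fin n}

lemma apply_lt_of_lt_of_avoids_3142_4132 (h3142 : ¬ ContainsPattern w p3142)
    (h4132 : ¬ ContainsPattern w p4132) (hab : a < b) (hbc : b < c) (hac : w a < w c)
    (hcb : w c < w b) (hda : d < a) : w d < w c := by
  by_contra! hcd
  have hcd : w c < w d := hcd.lt_of_ne (w.injective.ne (hda.trans (hab.trans hbc)).ne')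
  rcases (w.injective.ne (hda.trans hab).ne).lt_or_gt with hdb | hbd
  · exact h3142 (containsPattern_of_strictMono (f := ![d, a, b, c]) (g := ![w a, w c, w d, w b])
      (by simp [hda, hab, hbc]) (by simp [hac, hcd, hdb]) (by intro i; fin_cases i <;> rfl))
  · exact h4132 (containsPattern_of_strictMono (f := ![d, a, b, c]) (g := ![w a, w c, w b, w d])
      (by simp [hda, hab, hbc]) (by simp [hac, hcb, hbd]) (by intro i; fin_cases i <;> rfl))

lemma apply_lt_of_gt_of_avoids_2413_2431 (h2413 : ¬ ContainsPattern w p2413)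
    (h2431 : ¬ ContainsPattern w p2431) (hab : a < b) (hbc : b < c) (hac : w a < w c)
    (hcb : w c < w b) (hbd : b < d) : w a < w d := by
  by_contra! hda
  have hda : w d < w a := hda.lt_of_ne (w.injective.ne (hab.trans hbd).ne')
  rcases lt_trichotomy d c with hdc | rfl | hcd
  · exact h2413 (containsPattern_of_strictMono (f := ![a, b, d, c]) (g := ![w d, w a, w c, w b])
      (by simp [hab, hbd, hdc]) (by simp [hda, hac, hcb]) (by intro i; fin_cases i <;> rfl))
  · exact (hda.trans hac).false
  · exact h2431 (containsPattern_of_strictMono (f := ![a, b, c, d]) (g := ![w d, w a, w c, w b])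
      (by simp [hab, hbc, hcd]) (by simp [hda, hac, hcb]) (by intro i; fin_cases i <;> rfl))

lemma exists_extremal_of_containsPattern_p132 (h : ContainsPattern w p132) :
    ∃ a b c, a < b ∧ b < c ∧ w a < w c ∧ w c < w b ∧
      (∀ a' b' c', a' < b' → b' < c' → w a' < w c' → w c' < w b' → b ≤ b') ∧
      ∀ d, b < d → w a < w d → w d < w b → w c ≤ w d := by
  obtain ⟨b, ⟨a₀, c₀, hb⟩, hb_min⟩ := Set.exists_min_image
    {b | ∃ a c, a < b ∧ b < c ∧ w a < w c ∧ w c < w b} id (Set.toFinite _)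
    (by obtain ⟨a, b, c, h⟩ := containsPattern_p132_iff.1 h; exact ⟨b, a, c, h⟩)
  obtain ⟨c, ⟨a, hab, hbc, hac, hcb⟩, hc_min⟩ := Set.exists_min_image
    {c | ∃ a, a < b ∧ b < c ∧ w a < w c ∧ w c < w b} w (Set.toFinite _) ⟨c₀, a₀, hb⟩
  exact ⟨a, b, c, hab, hbc, hac, hcb,
    fun a' b' c' h₁ h₂ h₃ h₄ => hb_min b' ⟨a', c', h₁, h₂, h₃, h₄⟩,
    fun d hbd had hdb => hc_min d ⟨a, hab, hbd, had, hdb⟩⟩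

theorem not_containsPattern_p132 (hind : ¬ Decomposable w)
    (h2413 : ¬ ContainsPattern w p2413) (h2431 : ¬ ContainsPattern w p2431)
    (h3142 : ¬ ContainsPattern w p3142) (h4132 : ¬ ContainsPattern w p4132) :
    ¬ ContainsPattern w p132 := by
  intro h
  obtain ⟨a, b, c, hab, hbc, hac, hcb, hb_min, hc_min⟩ :=
    exists_extremal_of_containsPattern_p132 h
  have left_of_b : ∀ d < b, w d < w c := by
    intro d hdb
    rcases lt_trichotomy d a with hda | rfl | had
    · exact apply_lt_of_lt_of_avoids_3142_4132 h3142 h4132 hab hbc hac hcb hda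
    · exact hac
    · by_contra! hcd
      have hcd : w c < w d := hcd.lt_of_ne (w.injective.ne (hdb.trans hbc).ne')
      exact (hb_min a d c had (hdb.trans hbc) hac hcd).not_gt hdb
  have right_of_b : ∀ d, b ≤ d → w c ≤ w d := by
    intro d hbd
    rcases hbd.lt_or_eq with hbd | rfl
    · by_contra! hdc
      exact hdc.not_ge (hc_min d hbd
        (apply_lt_of_gt_of_avoids_2413_2431 h2413 h2431 hab hbc hac hcb hbd) (hdc.trans hcb))
    · exact hcb.le
  have hcb_val : (w c : ℕ) ≤ b := by
    refine Fin.val_le_of_injective_of_mapsTo_Iio (w⁻¹).injective fun j (hj : j < w c) => ?_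
    refine Set.mem_Iio.2 (lt_of_not_ge fun hbj => hj.not_ge ?_)
    simpa only [Perm.coe_inv, apply_symm_apply] using right_of_b _ hbj
  exact hind ⟨b, (Nat.zero_le _).trans_lt hab, b.isLt,
    fun i hi => (left_of_b i hi).trans_le hcb_val⟩

end Indecomposable

/-- the Rothe diagram of an indecomposable permutation avoiding
2413, 2431, 3142, 4132 is a Young diagram. -/
theorem rothe_isYoung {n : ℕ} (w : Equiv.Perm (Fin n))
    (hind : ¬ Decomposable w)
    (h1 : ¬ ContainsPattern w p2413) (h2 : ¬ ContainsPattern w p2431)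
    (h3 : ¬ ContainsPattern w p3142) (h4 : ¬ ContainsPattern w p4132) :
    ∀ c ∈ rothe w, ∀ i' j' : Fin n, i' ≤ c.1 → j' ≤ c.2 → (i', j') ∈ rothe w :=
  fun c hc i' j' hi hj => isLowerSet_rothe_of_not_containsPattern_p132
    (not_containsPattern_p132 hind h1 h2 h3 h4) (show (i', j') ≤ c from ⟨hi, hj⟩) hc
end

section
/- Let π be a permutation of {1,…,n} whose Rothe diagram is the Young diagram of a weakly decreasing sequence μ = (μ_1,…,μ_n) of nonnegative integers, i.e., D(π) = {(i,j) : 1 ≤ i ≤ n, 1 ≤ j ≤ μ_i}. Suppose 1 ≤ i < n, μ_i > μ_{i+1}, and π(i) = μ_i + 1. Let t be the transposition exchanging the values μ_i and μ_i + 1. Then D(t ∘ π) = D(π) \ {(i, μ_i)}, i.e., left multiplication by t deletes exactly the last cell of row i of the Rothe diagram. -/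
section Rothe

open Equiv

variable {n : ℕ}

theorem mem_rothe {w : Perm (Fin n)} {c : Fin n × Fin n} :
    c ∈ rothe w ↔ c.2 < w c.1 ∧ c.1 < w⁻¹ c.2 := by
  simp [rothe]

theorem lt_swap_apply_iff {a b c v : Fin n} (hab : (b : ℕ) = a + 1) (hca : c ≠ a)
    (hcb : c ≠ b) : c < swap a b v ↔ c < v := by
  rw [swap_apply_def]
  split_ifs <;> subst_vars <;> simp only [Fin.lt_def, ne_eq, Fin.ext_iff] at * <;> omega

/-- The length-decreasing case of the classical description of `D(s_a w)`. -/
theorem rothe_swap_mul {w : Perm (Fin n)} {a b : Fin n} (hab : (b : ℕ) = a + 1)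
    (hlt : w⁻¹ b < w⁻¹ a) :
    rothe (swap a b * w) =
      ((rothe w).erase (w⁻¹ b, a)).map ((Equiv.refl _).prodCongr (swap a b)).toEmbedding := by
  ext ⟨r, c⟩
  simp only [Finset.mem_map_equiv, Finset.mem_erase, mem_rothe, Perm.mul_apply, mul_inv_rev,
    swap_inv, prodCongr_symm, prodCongr_apply, refl_symm, symm_swap, Prod.map_apply, refl_apply]
  have hba : b ≠ a := fun h => by simp [h] at hab
  rcases eq_or_ne a c with rfl | hca
  · rw [swap_apply_left, Ne, Prod.mk.injEq, eq_false hba, and_false, not_false_eq_true, true_and]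
    refine and_congr_left fun hr => ?_
    have hwa : w r ≠ a := fun h => by
      rw [← Perm.eq_inv_iff_eq] at h
      subst h
      exact lt_asymm hr hlt
    have hwb : w r ≠ b := fun h => hr.ne (Perm.eq_inv_iff_eq.mpr h)
    rw [swap_apply_of_ne_of_ne hwa hwb]
    simp only [Fin.lt_def] at *
    omega
  rcases eq_or_ne b c with rfl | hcb
  · simp only [swap_apply_right, Ne, Prod.mk.injEq, and_true, Perm.eq_inv_iff_eq]
    rw [← and_assoc]
    refine and_congr_left fun _ => ?_
    rw [swap_apply_def]
    split_ifs <;> simp only [Fin.lt_def, Fin.ext_iff] at * <;> omega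
  rw [swap_apply_of_ne_of_ne hca.symm hcb.symm, lt_swap_apply_iff hab hca.symm hcb.symm]
  simp [hca.symm]

theorem mk_apply_mem_rothe_of_lt {w : Perm (Fin n)} {i r : Fin n}
    (hrow : ∀ c < w i, (i, c) ∈ rothe w) (hr : r < i) : (r, w i) ∈ rothe w := by
  refine mem_rothe.2 ⟨?_, by simpa using hr⟩
  by_contra! h
  have hi := (mem_rothe.1 (hrow (w r) (h.lt_of_ne (w.injective.ne hr.ne)))).2
  simp only [Perm.coe_inv, symm_apply_apply] at hi
  exact lt_asymm hr hi

theorem rothe_swap_mul_eq_erase_of_eq_young {w : Perm (Fin n)} {μ : Fin n → ℕ}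
    (hD : rothe w = Finset.univ.filter fun c : Fin n × Fin n => (c.2 : ℕ) < μ c.1)
    {i a b : Fin n} (hab : (b : ℕ) = a + 1) (hwi : w i = b) (hμi : μ i = b)
    (hμ : ∀ r, i < r → μ r < μ i) :
    rothe (swap a b * w) = (rothe w).erase (i, a) := by
  have hmem (c : Fin n × Fin n) : c ∈ rothe w ↔ (c.2 : ℕ) < μ c.1 := by simp [hD]
  have hinv : w⁻¹ b = i := by rw [← hwi]; exact w.symm_apply_apply i
  have hrow : ∀ c < w i, (i, c) ∈ rothe w := fun c hc =>
    (hmem _).2 (by rw [hμi, ← hwi]; exact hc)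
  have hlt : w⁻¹ b < w⁻¹ a :=
    hinv ▸ (mem_rothe.1 (hrow a (by rw [hwi, Fin.lt_def]; omega))).2
  have hμne : ∀ r ≠ i, μ r ≠ b := by
    intro r hr
    rcases hr.lt_or_gt with h | h
    · have := (hmem _).1 (mk_apply_mem_rothe_of_lt hrow h)
      dsimp only at this
      rw [hwi] at this
      omega
    · have := hμ r h
      omega
  rw [rothe_swap_mul hab hlt, hinv]
  ext ⟨r, c⟩
  simp only [Finset.mem_map_equiv, Finset.mem_erase, hmem, prodCongr_symm, prodCongr_apply,
    refl_symm, symm_swap, Prod.map_apply, refl_apply, ne_eq, Prod.mk.injEq]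
  have hsw : ((swap a b c : Fin n) : ℕ) = if c = a then b else if c = b then a else c := by
    simp only [swap_apply_def, apply_ite Fin.val]
  by_cases hri : r = i
  · subst hri
    simp only [true_and, hsw, hμi, Fin.ext_iff]
    split_ifs <;> omega
  · have := hμne r hri
    simp only [hri, false_and, not_false_eq_true, true_and, hsw, Fin.ext_iff]
    split_ifs <;> omega

end Rothe

/-- In 0-based indexing the hypothesis `π i = μ i` is the paper's `π(i) = μ_i + 1`, and the
transposition exchanges the values `μ_i - 1` and `μ_i`. -/
theorem rothe_swap_mul_eq_erase {n : ℕ} (π : Equiv.Perm (Fin n)) (μ : Fin n → ℕ)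
    (hdec : ∀ i j : Fin n, i ≤ j → μ j ≤ μ i)
    (hD : rothe π = Finset.univ.filter fun c : Fin n × Fin n => (c.2 : ℕ) < μ c.1)
    (i : ℕ) (hi : i + 1 < n)
    (hmu : μ ⟨i + 1, hi⟩ < μ ⟨i, Nat.lt_of_succ_lt hi⟩)
    (hval : ((π ⟨i, Nat.lt_of_succ_lt hi⟩ : Fin n) : ℕ) = μ ⟨i, Nat.lt_of_succ_lt hi⟩) :
    rothe (Equiv.swap
        (⟨μ ⟨i, Nat.lt_of_succ_lt hi⟩ - 1,
          lt_of_le_of_lt (Nat.sub_le _ 1)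
            (hval ▸ (π ⟨i, Nat.lt_of_succ_lt hi⟩).isLt)⟩ : Fin n)
        (⟨μ ⟨i, Nat.lt_of_succ_lt hi⟩,
          hval ▸ (π ⟨i, Nat.lt_of_succ_lt hi⟩).isLt⟩ : Fin n) * π)
      = (rothe π).erase
          (⟨i, Nat.lt_of_succ_lt hi⟩,
           ⟨μ ⟨i, Nat.lt_of_succ_lt hi⟩ - 1,
            lt_of_le_of_lt (Nat.sub_le _ 1)
              (hval ▸ (π ⟨i, Nat.lt_of_succ_lt hi⟩).isLt)⟩) := by
  exact rothe_swap_mul_eq_erase_of_eq_young hD (by dsimp only; omega) (Fin.ext hval) rfl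
    fun r hr => (hdec ⟨i + 1, hi⟩ r (Fin.lt_def.1 hr)).trans_lt hmu
end
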